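/- arXiv:1912.00483 — 2 statements merged into one kernel-verified Lean document; each statement's English description precedes it below -/
import Mathlib

section
/- A pseudo-Riemannian manifold (M,g) of dimension n ≥ 3 is locally symmetric (∇R = 0) if and only if it is concircularly symmetric (∇C = 0). -/
/-!
If `∇C = 0` then `∇R = f ⊗ G` with `f = dτ / (n(n-1))`. Evaluating the second Bianchi identity
for `f ⊗ G` on an orthonormal frame `(eᵢ)` gives
`f(η) εᵢεⱼ = εⱼ f(eᵢ) g(η, eᵢ) + εᵢ f(eⱼ) g(η, eⱼ)` for `i ≠ j`. Taking `η = eₖ` with `k ∉ {i, j}`,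
which needs `n ≥ 3`, kills `f` on the frame, and then the same identity kills `f` everywhere,
so `∇R = 0`. Conversely `∇R = 0` forces `dτ = 0`, since `dτ` is a contraction of `∇R`.
-/

theorem Fintype.exists_ne_ne_of_three_le_card {ι : Type*} [Fintype ι] (h : 3 ≤ Fintype.card ι)
    (k : ι) : ∃ i j : ι, i ≠ j ∧ i ≠ k ∧ j ≠ k := by
  classical
  have hcard : 1 < (Finset.univ.erase k).card := by
    rw [Finset.card_erase_of_mem (Finset.mem_univ k), Finset.card_univ]
    omega
  obtain ⟨i, hi, j, hj, hij⟩ := Finset.one_lt_card.mp hcard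
  exact ⟨i, j, hij, Finset.ne_of_mem_erase hi, Finset.ne_of_mem_erase hj⟩

section BianchiFrame

variable {V ι : Type*} {g : V → V → ℝ} {G : V → V → V → V → ℝ} {DR : V → V → V → V → V → ℝ}
  {f : V → ℝ} {e : ι → V} {ε : ι → ℝ}

theorem mul_frame_eq_of_bianchi [DecidableEq ι]
    (hG : ∀ X Y Z W, G X Y Z W = g X Z * g Y W - g Y Z * g X W)
    (hDR : ∀ ζ X Y Z W, DR ζ X Y Z W = f ζ * G X Y Z W)
    (hBianchi : ∀ U X Y Z W, DR U X Y Z W + DR X Y U Z W + DR Y U X Z W = 0)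
    (hortho : ∀ i j, g (e i) (e j) = if i = j then ε i else 0)
    {i j : ι} (hij : i ≠ j) (η : V) :
    f η * (ε i * ε j) = f (e i) * (ε j * g η (e i)) + f (e j) * (ε i * g η (e j)) := by
  have h := hBianchi η (e i) (e j) (e i) (e j)
  simp only [hDR, hG, hortho, if_neg hij, if_neg hij.symm, if_true] at h
  linear_combination h

theorem eq_zero_of_bianchi [Fintype ι] [DecidableEq ι] (hι : 3 ≤ Fintype.card ι)
    (hG : ∀ X Y Z W, G X Y Z W = g X Z * g Y W - g Y Z * g X W)
    (hDR : ∀ ζ X Y Z W, DR ζ X Y Z W = f ζ * G X Y Z W)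
    (hBianchi : ∀ U X Y Z W, DR U X Y Z W + DR X Y U Z W + DR Y U X Z W = 0)
    (hε : ∀ i, ε i ≠ 0) (hortho : ∀ i j, g (e i) (e j) = if i = j then ε i else 0) (η : V) :
    f η = 0 := by
  have hframe : ∀ k, f (e k) = 0 := by
    intro k
    obtain ⟨i, j, hij, hik, hjk⟩ := Fintype.exists_ne_ne_of_three_le_card hι k
    have h := mul_frame_eq_of_bianchi hG hDR hBianchi hortho hij (e k)
    simp only [hortho, if_neg hik.symm, if_neg hjk.symm, mul_zero, add_zero] at h
    exact (mul_eq_zero.mp h).resolve_right (mul_ne_zero (hε i) (hε j))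
  obtain ⟨i, j, hij⟩ := Fintype.exists_pair_of_one_lt_card (show 1 < Fintype.card ι by omega)
  have h := mul_frame_eq_of_bianchi hG hDR hBianchi hortho hij η
  simp only [hframe, zero_mul, add_zero] at h
  exact (mul_eq_zero.mp h).resolve_right (mul_ne_zero (hε i) (hε j))

end BianchiFrame

theorem locally_symmetric_iff_concircularly_symmetric_general
    {M V : Type*}
    (n : ℕ) (hn : 3 ≤ n)
    (g : M → V → V → ℝ)
    (G : M → V → V → V → V → ℝ)
    (hG : ∀ p X Y Z W, G p X Y Z W = g p X Z * g p Y W - g p Y Z * g p X W)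
    (DR : M → V → V → V → V → V → ℝ)
    (Dτ : M → V → ℝ)
    (DC : M → V → V → V → V → V → ℝ)
    (hDC : ∀ p ζ X Y Z W, DC p ζ X Y Z W =
      DR p ζ X Y Z W - (Dτ p ζ / ((n : ℝ) * ((n : ℝ) - 1))) * G p X Y Z W)
    (hBianchi2 : ∀ p U X Y Z W,
      DR p U X Y Z W + DR p X Y U Z W + DR p Y U X Z W = 0)
    (e : M → Fin n → V) (ε : Fin n → ℝ)
    (hε : ∀ i, ε i = 1 ∨ ε i = -1)
    (hortho : ∀ p i j, g p (e p i) (e p j) = if i = j then ε i else 0)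
    (hDτ : ∀ p ζ, Dτ p ζ =
      ∑ i, ∑ j, ε i * ε j * DR p ζ (e p i) (e p j) (e p i) (e p j)) :
    (∀ p ζ X Y Z W, DR p ζ X Y Z W = 0) ↔
      (∀ p ζ X Y Z W, DC p ζ X Y Z W = 0) := by
  constructor
  · intro hR p ζ X Y Z W
    have hτ : Dτ p ζ = 0 := by simp [hDτ, hR]
    rw [hDC, hR, hτ]
    ring
  · intro hC p
    have hR : ∀ ζ X Y Z W,
        DR p ζ X Y Z W = Dτ p ζ / ((n : ℝ) * ((n : ℝ) - 1)) * G p X Y Z W := fun ζ X Y Z W ↦ by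
      linarith [hDC p ζ X Y Z W, hC p ζ X Y Z W]
    have hε0 : ∀ i, ε i ≠ 0 := fun i ↦ by rcases hε i with h | h <;> norm_num [h]
    intro ζ X Y Z W
    rw [hR, eq_zero_of_bianchi (by simpa using hn) (hG p) hR (hBianchi2 p) hε0 (hortho p) ζ,
      zero_mul]

/-- A pseudo-Riemannian manifold of dimension `n ≥ 3` is locally
symmetric (`∇R = 0`) iff it is concircularly symmetric (`∇C = 0`).
`DR p ζ X Y Z W` denotes `(∇_ζ R)(X,Y,Z,W)`, `Dτ p ζ = ζ(τ)` (obtained from `∇R`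
by metric contraction), and `∇C = ∇R - (dτ/(n(n-1))) ⊗ G`; the second Bianchi
identity is supplied for `∇R`. -/
theorem locally_symmetric_iff_concircularly_symmetric
    {M V : Type*} [AddCommGroup V] [Module ℝ V]
    (n : ℕ) (hn : 3 ≤ n)
    (g : M → V → V → ℝ)
    (G : M → V → V → V → V → ℝ)
    (hG : ∀ p X Y Z W, G p X Y Z W = g p X Z * g p Y W - g p Y Z * g p X W)
    (DR : M → V → V → V → V → V → ℝ)
    (Dτ : M → V → ℝ)
    (DC : M → V → V → V → V → V → ℝ)
    (hDC : ∀ p ζ X Y Z W, DC p ζ X Y Z W =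
      DR p ζ X Y Z W - (Dτ p ζ / ((n : ℝ) * ((n : ℝ) - 1))) * G p X Y Z W)
    (hDRskew : ∀ p ζ X Y Z W, DR p ζ X Y Z W = - DR p ζ Y X Z W)
    (hDRpair : ∀ p ζ X Y Z W, DR p ζ X Y Z W = DR p ζ Z W X Y)
    (hBianchi2 : ∀ p U X Y Z W,
      DR p U X Y Z W + DR p X Y U Z W + DR p Y U X Z W = 0)
    (e : M → Fin n → V) (ε : Fin n → ℝ)
    (hε : ∀ i, ε i = 1 ∨ ε i = -1)
    (hortho : ∀ p i j, g p (e p i) (e p j) = if i = j then ε i else 0)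
    (hDτ : ∀ p ζ, Dτ p ζ =
      ∑ i, ∑ j, ε i * ε j * DR p ζ (e p i) (e p j) (e p i) (e p j)) :
    (∀ p ζ X Y Z W, DR p ζ X Y Z W = 0) ↔
      (∀ p ζ X Y Z W, DC p ζ X Y Z W = 0) :=
  locally_symmetric_iff_concircularly_symmetric_general n hn g G hG DR Dτ DC hDC hBianchi2 e ε hε
    hortho hDτ
end

section
/- If ∇C = 0 on a connected pseudo-Riemannian manifold of dimension n ≥ 3, then the scalar curvature τ is constant and the manifold is locally symmetric. -/
/-!
If `∇C = 0` then `∇R = (dτ / (n(n-1))) ⊗ G`, and the second Bianchi identity turns into the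
cyclic identity `dτ(U) G(X,Y,Z,W) + dτ(X) G(Y,U,Z,W) + dτ(Y) G(U,X,Z,W) = 0`. Evaluating it on
two distinct vectors `eₐ, e_b` of an orthonormal frame expresses `dτ(U)` through `dτ(eₐ)` and
`dτ(e_b)` weighted by `g(U,eₐ)` and `g(U,e_b)`; for `U = e_c` with `c ∉ {a,b}`, which exists
since `n ≥ 3`, this gives `dτ(e_c) = 0`. Hence `dτ` vanishes on the frame and then everywhere,
and so does `∇R`.
-/

theorem exists_pair_ne_of_three_le_card {ι : Type*} [Fintype ι] [DecidableEq ι]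
    (hι : 3 ≤ Fintype.card ι) (c : ι) : ∃ a b, a ≠ b ∧ c ≠ a ∧ c ≠ b := by
  have hcard : 1 < ({c}ᶜ : Finset ι).card := by
    rw [Finset.card_compl, Finset.card_singleton]
    omega
  obtain ⟨a, b, ha, hb, hab⟩ := Finset.one_lt_card_iff.mp hcard
  simp only [Finset.mem_compl, Finset.mem_singleton] at ha hb
  exact ⟨a, b, hab, Ne.symm ha, Ne.symm hb⟩

section CyclicIdentity

variable {ι V : Type*} {g : V → V → ℝ} {G : V → V → V → V → ℝ} {e : ι → V} {f : V → ℝ}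

theorem cyclic_sum_eq_zero_of_eq_div_mul {R : V → V → V → V → V → ℝ} {c : ℝ} (hc : c ≠ 0)
    (hR : ∀ ζ X Y Z W, R ζ X Y Z W = f ζ / c * G X Y Z W)
    (hBianchi : ∀ U X Y Z W, R U X Y Z W + R X Y U Z W + R Y U X Z W = 0)
    (U X Y Z W : V) : f U * G X Y Z W + f X * G Y U Z W + f Y * G U X Z W = 0 := by
  have h := hBianchi U X Y Z W
  simp only [hR] at h
  field_simp at h
  simpa using h

variable (hG : ∀ X Y Z W, G X Y Z W = g X Z * g Y W - g Y Z * g X W)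
  (horth : Pairwise fun i j => g (e i) (e j) = 0)
  (hf : ∀ U X Y Z W, f U * G X Y Z W + f X * G Y U Z W + f Y * G U X Z W = 0)
include hG horth hf

theorem mul_eq_of_cyclic_sum_eq_zero {a b : ι} (hab : a ≠ b) (U : V) :
    f U * (g (e a) (e a) * g (e b) (e b)) =
      f (e a) * g U (e a) * g (e b) (e b) + f (e b) * g (e a) (e a) * g U (e b) := by
  have h := hf U (e a) (e b) (e a) (e b)
  simp only [hG, horth hab, horth hab.symm] at h
  linear_combination h

theorem apply_frame_eq_zero_of_cyclic_sum_eq_zero (hnull : ∀ i, g (e i) (e i) ≠ 0)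
    {a b c : ι} (hab : a ≠ b) (hca : c ≠ a) (hcb : c ≠ b) : f (e c) = 0 := by
  have h := mul_eq_of_cyclic_sum_eq_zero hG horth hf hab (e c)
  simp only [horth hca, horth hcb, mul_zero, zero_mul, add_zero] at h
  exact (mul_eq_zero.mp h).resolve_right (mul_ne_zero (hnull a) (hnull b))

theorem eq_zero_of_cyclic_sum_eq_zero [Fintype ι] (hι : 3 ≤ Fintype.card ι)
    (hnull : ∀ i, g (e i) (e i) ≠ 0) (U : V) : f U = 0 := by
  classical
  have hframe (c : ι) : f (e c) = 0 := by
    obtain ⟨a, b, hab, hca, hcb⟩ := exists_pair_ne_of_three_le_card hι c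
    exact apply_frame_eq_zero_of_cyclic_sum_eq_zero hG horth hf hnull hab hca hcb
  obtain ⟨c⟩ := Fintype.card_pos_iff.mp (by omega : 0 < Fintype.card ι)
  obtain ⟨a, b, hab, -, -⟩ := exists_pair_ne_of_three_le_card hι c
  have h := mul_eq_of_cyclic_sum_eq_zero hG horth hf hab U
  simp only [hframe, zero_mul, add_zero] at h
  exact (mul_eq_zero.mp h).resolve_right (mul_ne_zero (hnull a) (hnull b))

end CyclicIdentity

theorem concircularly_symmetric_implies_locally_symmetric_general
    {M V : Type*}
    (n : ℕ) (hn : 3 ≤ n)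
    (g : M → V → V → ℝ)
    (G : M → V → V → V → V → ℝ)
    (hG : ∀ p X Y Z W, G p X Y Z W = g p X Z * g p Y W - g p Y Z * g p X W)
    (DR : M → V → V → V → V → V → ℝ)
    (Dτ : M → V → ℝ)
    (DC : M → V → V → V → V → V → ℝ)
    (hDC : ∀ p ζ X Y Z W, DC p ζ X Y Z W =
      DR p ζ X Y Z W - (Dτ p ζ / ((n : ℝ) * ((n : ℝ) - 1))) * G p X Y Z W)
    (hBianchi2 : ∀ p U X Y Z W,
      DR p U X Y Z W + DR p X Y U Z W + DR p Y U X Z W = 0)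
    (e : M → Fin n → V) (ε : Fin n → ℝ)
    (hε : ∀ i, ε i = 1 ∨ ε i = -1)
    (hortho : ∀ p i j, g p (e p i) (e p j) = if i = j then ε i else 0)
    (hCsym : ∀ p ζ X Y Z W, DC p ζ X Y Z W = 0) :
    (∀ p ζ, Dτ p ζ = 0) ∧ (∀ p ζ X Y Z W, DR p ζ X Y Z W = 0) := by
  have hc : (n : ℝ) * ((n : ℝ) - 1) ≠ 0 := by
    have : (3 : ℝ) ≤ n := by exact_mod_cast hn
    exact mul_ne_zero (by linarith) (by linarith)
  have hDR p ζ X Y Z W : DR p ζ X Y Z W = Dτ p ζ / ((n : ℝ) * ((n : ℝ) - 1)) * G p X Y Z W :=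
    sub_eq_zero.mp ((hDC p ζ X Y Z W).symm.trans (hCsym p ζ X Y Z W))
  have hnull p i : g p (e p i) (e p i) ≠ 0 := by
    rw [hortho, if_pos rfl]
    rcases hε i with h | h <;> norm_num [h]
  have hDτ p : ∀ ζ, Dτ p ζ = 0 :=
    eq_zero_of_cyclic_sum_eq_zero (hG p) (fun i j hij => (hortho p i j).trans (if_neg hij))
      (cyclic_sum_eq_zero_of_eq_div_mul hc (hDR p) (hBianchi2 p)) (by simpa using hn) (hnull p)
  refine ⟨hDτ, fun p ζ X Y Z W => ?_⟩
  rw [hDR, hDτ, zero_div, zero_mul]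

/-- If `∇C = 0` on a connected pseudo-Riemannian manifold of dimension
`n ≥ 3`, then the scalar curvature is constant (`dτ = 0`) and the manifold is
locally symmetric (`∇R = 0`). Data and bridging identities as in the paper:
`∇C = ∇R - (dτ/(n(n-1))) ⊗ G`, the second Bianchi identity, and `dτ` arising as a
metric contraction of `∇R`. -/
theorem concircularly_symmetric_implies_locally_symmetric
    {M V : Type*} [AddCommGroup V] [Module ℝ V]
    (n : ℕ) (hn : 3 ≤ n)
    (g : M → V → V → ℝ)
    (G : M → V → V → V → V → ℝ)
    (hG : ∀ p X Y Z W, G p X Y Z W = g p X Z * g p Y W - g p Y Z * g p X W)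
    (τ : M → ℝ)
    (DR : M → V → V → V → V → V → ℝ)
    (Dτ : M → V → ℝ)
    (DC : M → V → V → V → V → V → ℝ)
    (hDC : ∀ p ζ X Y Z W, DC p ζ X Y Z W =
      DR p ζ X Y Z W - (Dτ p ζ / ((n : ℝ) * ((n : ℝ) - 1))) * G p X Y Z W)
    (hDRskew : ∀ p ζ X Y Z W, DR p ζ X Y Z W = - DR p ζ Y X Z W)
    (hDRpair : ∀ p ζ X Y Z W, DR p ζ X Y Z W = DR p ζ Z W X Y)
    (hBianchi2 : ∀ p U X Y Z W,
      DR p U X Y Z W + DR p X Y U Z W + DR p Y U X Z W = 0)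
    (e : M → Fin n → V) (ε : Fin n → ℝ)
    (hε : ∀ i, ε i = 1 ∨ ε i = -1)
    (hortho : ∀ p i j, g p (e p i) (e p j) = if i = j then ε i else 0)
    (hDτ : ∀ p ζ, Dτ p ζ =
      ∑ i, ∑ j, ε i * ε j * DR p ζ (e p i) (e p j) (e p i) (e p j))
    (hCsym : ∀ p ζ X Y Z W, DC p ζ X Y Z W = 0) :
    (∀ p ζ, Dτ p ζ = 0) ∧ (∀ p ζ X Y Z W, DR p ζ X Y Z W = 0) :=
  concircularly_symmetric_implies_locally_symmetric_general n hn g G hG DR Dτ DC hDC hBianchi2 e ε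
    hε hortho hCsym
end
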